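/- arXiv:2003.09999 — 4 statements merged into one kernel-verified Lean document; each statement's English description precedes it below -/
import Mathlib

section
/- Let μ : ℂ² ⊗ ℂ² → ℂ² be a linear map and e ∈ ℂ², and let M ⊆ ℂ² be a set of states containing e such that μ(e ⊗ v) = v = μ(v ⊗ e) for all v ∈ M and μ restricted to M is an associative multiplication landing in M. If the elements of M span all of ℂ², then μ(a ⊗ b) = μ(b ⊗ a) for all a, b ∈ M; that is, the monoid (M, μ) is commutative. -/
/-!
The unit laws hold on a spanning set, hence on all of `ℂ²` by linearity. A bilinear
multiplication with a two-sided unit `e` makes `a` commute with everything in `span {e, a}`,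
since both `μ a (x e + y a)` and `μ (x e + y a) a` equal `x a + y μ a a`. In dimension two,
either `a` is a multiple of `e` (so `a ∈ span {e, b}`) or `{e, a}` is a basis (so
`b ∈ span {e, a}`); either way `a` and `b` commute.
-/

namespace LinearMap

variable {R V : Type*} [CommSemiring R] [AddCommMonoid V] [Module R V]

theorem apply_comm_of_mem_span_pair (μ : V →ₗ[R] V →ₗ[R] V) {e a b : V}
    (hl : μ e a = a) (hr : μ a e = a) (hb : b ∈ Submodule.span R {e, a}) :
    μ a b = μ b a := by
  obtain ⟨x, y, rfl⟩ := Submodule.mem_span_pair.1 hb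
  simp only [map_add, map_smul, add_apply, smul_apply, hl, hr]

end LinearMap

section

variable {K V : Type*} [Field K] [AddCommGroup V] [Module K V]

theorem mem_span_pair_or_mem_span_pair_of_finrank_eq_two (h2 : Module.finrank K V = 2)
    {e : V} (he : e ≠ 0) (a b : V) :
    b ∈ Submodule.span K {e, a} ∨ a ∈ Submodule.span K {e, b} := by
  by_cases ha : ∃ c : K, c • e = a
  · obtain ⟨c, rfl⟩ := ha
    exact Or.inr (Submodule.smul_mem _ c (Submodule.subset_span (Set.mem_insert e _)))
  · left
    have hind : LinearIndependent K ![e, a] :=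
      (LinearIndependent.pair_iff' he).2 (by simpa using ha)
    have htop := hind.span_eq_top_of_card_eq_finrank (by simp [h2])
    rw [Matrix.range_cons_cons_empty] at htop
    exact htop ▸ Submodule.mem_top

theorem LinearMap.apply_comm_of_finrank_eq_two (h2 : Module.finrank K V = 2)
    (μ : V →ₗ[K] V →ₗ[K] V) {e : V} (hl : ∀ v, μ e v = v) (hr : ∀ v, μ v e = v) (a b : V) :
    μ a b = μ b a := by
  have he : e ≠ 0 := by
    rintro rfl
    have : Subsingleton V := ⟨fun v w => by rw [← hl v, ← hl w, map_zero]; rfl⟩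
    simp [Module.finrank_zero_of_subsingleton] at h2
  rcases mem_span_pair_or_mem_span_pair_of_finrank_eq_two h2 he a b with hb | ha
  · exact μ.apply_comm_of_mem_span_pair (hl a) (hr a) hb
  · exact (μ.apply_comm_of_mem_span_pair (hl b) (hr b) ha).symm

end

theorem monoid_over_qubit_spanning_commutative_general
    (μ : (ℂ × ℂ) →ₗ[ℂ] (ℂ × ℂ) →ₗ[ℂ] (ℂ × ℂ)) (e : ℂ × ℂ) (M : Set (ℂ × ℂ))
    (hunit : ∀ v ∈ M, μ e v = v ∧ μ v e = v)
    (hspan : Submodule.span ℂ M = ⊤) :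
    ∀ a ∈ M, ∀ b ∈ M, μ a b = μ b a := by
  have hl : μ e = LinearMap.id := LinearMap.ext_on hspan fun v hv => (hunit v hv).1
  have hr : μ.flip e = LinearMap.id := LinearMap.ext_on hspan fun v hv => (hunit v hv).2
  intro a _ b _
  exact μ.apply_comm_of_finrank_eq_two (by simp) (fun v => congr($hl v))
    (fun v => congr($hr v)) a b

/-- let `μ` be a bilinear multiplication on `ℂ²`, `M ⊆ ℂ²` a set of states
containing the unit `e`, with `μ(e ⊗ v) = v = μ(v ⊗ e)` for `v ∈ M`, `μ` restricted to `M`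
associative and landing in `M`.  If the elements of `M` span all of `ℂ²`, then
`μ(a ⊗ b) = μ(b ⊗ a)` for all `a, b ∈ M`. -/
theorem monoid_over_qubit_spanning_commutative
    (μ : (ℂ × ℂ) →ₗ[ℂ] (ℂ × ℂ) →ₗ[ℂ] (ℂ × ℂ)) (e : ℂ × ℂ) (M : Set (ℂ × ℂ))
    (he : e ∈ M)
    (hunit : ∀ v ∈ M, μ e v = v ∧ μ v e = v)
    (hclosed : ∀ a ∈ M, ∀ b ∈ M, μ a b ∈ M)
    (hassoc : ∀ a ∈ M, ∀ b ∈ M, ∀ c ∈ M, μ (μ a b) c = μ a (μ b c))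
    (hspan : Submodule.span ℂ M = ⊤) :
    ∀ a ∈ M, ∀ b ∈ M, μ a b = μ b a :=
  monoid_over_qubit_spanning_commutative_general μ e M hunit hspan
end

section
/- There is no monoid over ℂ² (a set M of distinct vectors in ℂ² with an associative bilinear multiplication μ : ℂ² ⊗ ℂ² → ℂ² having a unit in M) whose multiplicative structure is isomorphic as a monoid to the group of unit quaternions. -/
/-!
A bilinear multiplication `μ` on a two-dimensional space is commutative on any two vectors
`a`, `b` sharing a two-sided unit `e ≠ 0`: one of them, say `b`, lies in the span of `e` and
the other, and then `μ a b = μ b a` by bilinearity. Hence the range of `f` is a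
commutative monoid, while `i * j ≠ j * i` among the unit quaternions, contradicting injectivity.
-/

open Quaternion Module Submodule

theorem mem_span_pair_or_mem_span_pair_of_finrank_eq_two_s8 {K V : Type*} [Field K]
    [AddCommGroup V] [Module K V] (hV : finrank K V = 2) {e : V} (he : e ≠ 0) (a b : V) :
    a ∈ span K {e, b} ∨ b ∈ span K {e, a} := by
  by_cases ha : ∃ c : K, c • e = a
  · obtain ⟨c, rfl⟩ := ha
    exact .inl (mem_span_pair.2 ⟨c, 0, by simp⟩)
  · have hind : LinearIndependent K ![e, a] :=
      (LinearIndependent.pair_iff' he).2 (not_exists.1 ha)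
    have hspan : span K {e, a} = ⊤ := by
      simpa [Matrix.range_cons, Set.pair_comm] using
        hind.span_eq_top_of_card_eq_finrank (by simp [hV])
    exact .inr (hspan ▸ mem_top)

theorem LinearMap.apply_comm_of_mem_span_pair_s8 {K V : Type*} [CommSemiring K]
    [AddCommMonoid V] [Module K V] (μ : V →ₗ[K] V →ₗ[K] V) {e a b : V}
    (hea : μ e a = a) (hae : μ a e = a) (hb : b ∈ span K {e, a}) :
    μ a b = μ b a := by
  obtain ⟨c, d, rfl⟩ := mem_span_pair.1 hb
  simp [hea, hae]

theorem LinearMap.apply_comm_of_finrank_eq_two_s8 {K V : Type*} [Field K]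
    [AddCommGroup V] [Module K V] (hV : finrank K V = 2) (μ : V →ₗ[K] V →ₗ[K] V)
    {e a b : V} (hea : μ e a = a) (hae : μ a e = a) (heb : μ e b = b) (hbe : μ b e = b) :
    μ a b = μ b a := by
  rcases eq_or_ne e 0 with rfl | he
  · simp only [map_zero, LinearMap.zero_apply] at hea hbe
    simp [← hea, ← hbe]
  rcases mem_span_pair_or_mem_span_pair_of_finrank_eq_two_s8 hV he a b with ha | hb
  · exact (μ.apply_comm_of_mem_span_pair_s8 heb hbe ha).symm
  · exact μ.apply_comm_of_mem_span_pair_s8 hea hae hb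

theorem Quaternion.exists_mem_sphere_mul_ne :
    ∃ q q' : Metric.sphere (0 : ℍ[ℝ]) 1, q * q' ≠ q' * q := by
  have hsphere (q : ℍ[ℝ]) (hq : normSq q = 1) : q ∈ Metric.sphere (0 : ℍ[ℝ]) 1 := by
    rw [mem_sphere_zero_iff_norm, norm_eq_sqrt_real_inner, inner_self, hq, Real.sqrt_one]
  let i : ℍ[ℝ] := ⟨0, 1, 0, 0⟩
  let j : ℍ[ℝ] := ⟨0, 0, 1, 0⟩
  have hij : i * j ≠ j * i := fun h => by
    have hk := (imK_mul _ _).symm.trans ((Quaternion.ext_iff.1 h).2.2.2.trans (imK_mul _ _))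
    norm_num [i, j] at hk
  refine ⟨⟨i, hsphere i ((normSq_def' _).trans (by norm_num [i]))⟩,
    ⟨j, hsphere j ((normSq_def' _).trans (by norm_num [j]))⟩, fun h => hij ?_⟩
  exact congrArg Subtype.val h

/-- there is no monoid over `ℂ²` (a set `M` of vectors in `ℂ²` with an
associative bilinear multiplication `μ` having a unit `e ∈ M`) whose multiplicative
structure is isomorphic as a monoid to the group of unit quaternions. -/
theorem no_monoid_over_qubit_iso_unit_quaternions :
    ¬ ∃ (M : Set (ℂ × ℂ)) (μ : (ℂ × ℂ) →ₗ[ℂ] (ℂ × ℂ) →ₗ[ℂ] (ℂ × ℂ)) (e : ℂ × ℂ)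
        (f : Metric.sphere (0 : ℍ[ℝ]) 1 → ℂ × ℂ),
      e ∈ M ∧
      (∀ v ∈ M, μ e v = v ∧ μ v e = v) ∧
      (∀ a ∈ M, ∀ b ∈ M, μ a b ∈ M) ∧
      (∀ a ∈ M, ∀ b ∈ M, ∀ c ∈ M, μ (μ a b) c = μ a (μ b c)) ∧
      Function.Injective f ∧
      Set.range f = M ∧
      f 1 = e ∧
      (∀ q q' : Metric.sphere (0 : ℍ[ℝ]) 1, f (q * q') = μ (f q) (f q')) := by
  rintro ⟨-, μ, e, f, -, hunit, -, -, hinj, rfl, -, hmul⟩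
  obtain ⟨q, q', hne⟩ := Quaternion.exists_mem_sphere_mul_ne
  refine hne (hinj ?_)
  rw [hmul, hmul]
  exact μ.apply_comm_of_finrank_eq_two_s8 (by simp) (hunit _ ⟨q, rfl⟩).1 (hunit _ ⟨q, rfl⟩).2
    (hunit _ ⟨q', rfl⟩).1 (hunit _ ⟨q', rfl⟩).2
end

section
/- Let α₁, α₂ be real, set x⁺ = (α₁+α₂)/2, x⁻ = x⁺ − α₂, z = −sin x⁺ + i cos x⁻ and z' = cos x⁺ − i sin x⁻ (complex numbers, with z, z' not both zero and z, z' ≠ 0). Define β₁ = arg z + arg z', β₂ = 2 arg(i + |z|/|z'|), β₃ = arg z − arg z'. Then with H = (i+k)/√2, the quaternion identity (α₁,z-axis) · H · (α₂,z-axis) = H · (β₁,z-axis) · H · (β₂,z-axis) · H · (β₃,z-axis) · H holds, where (θ, z-axis) denotes cos(θ/2) + k sin(θ/2). -/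
/-!
Conjugation by `H` turns Z-rotations into X-rotations and `H² = -1`, so the right-hand side is
the Euler product `X(β₁) Z(β₂) X(β₃)`. Writing `α₁ = x⁺ + x⁻`, `α₂ = x⁺ - x⁻`, the left-hand side
is `(Re z + i Im z - j Im z' + k Re z')/√2`. In the Euler product `β₁ ± β₃` are `2 arg z` and
`2 arg z'`, while `(cos (β₂/2), sin (β₂/2)) = (|z|, |z'|)/√2` because `|z|² + |z'|² = 2`; so it is
the same quaternion written with `z` and `z'` in polar form.
-/

open Quaternion Real Complex

/-- The quaternion `cos (θ/2) + k sin (θ/2)` (a Z-axis rotation by `θ`). -/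
noncomputable def Zrot (θ : ℝ) : ℍ[ℝ] := ⟨Real.cos (θ / 2), 0, 0, Real.sin (θ / 2)⟩

/-- The Hadamard quaternion `H = (i + k)/√2`. -/
noncomputable def Hq : ℍ[ℝ] := ⟨0, 1 / Real.sqrt 2, 0, 1 / Real.sqrt 2⟩

noncomputable def Xrot (θ : ℝ) : ℍ[ℝ] := ⟨Real.cos (θ / 2), Real.sin (θ / 2), 0, 0⟩

lemma Hq_mul_Hq : Hq * Hq = -1 := by
  ext <;> simp only [Quaternion.re_mul, Quaternion.imI_mul, Quaternion.imJ_mul,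
    Quaternion.imK_mul] <;> norm_num [Hq, ← sq]

lemma Hq_mul_Zrot (θ : ℝ) : Hq * Zrot θ = Xrot θ * Hq := by
  ext <;> simp only [Quaternion.re_mul, Quaternion.imI_mul, Quaternion.imJ_mul,
    Quaternion.imK_mul] <;> simp [Zrot, Hq, Xrot] <;> ring

lemma Hq_Zrot_Hq_Zrot_Hq_Zrot_Hq_eq_Xrot_Zrot_Xrot (β₁ β₂ β₃ : ℝ) :
    Hq * Zrot β₁ * Hq * Zrot β₂ * Hq * Zrot β₃ * Hq = Xrot β₁ * Zrot β₂ * Xrot β₃ :=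
  calc Hq * Zrot β₁ * Hq * Zrot β₂ * Hq * Zrot β₃ * Hq
      = Xrot β₁ * (Hq * Hq) * Zrot β₂ * (Hq * Zrot β₃) * Hq := by
        rw [Hq_mul_Zrot]; noncomm_ring
    _ = Xrot β₁ * (Hq * Hq) * Zrot β₂ * Xrot β₃ * (Hq * Hq) := by
        rw [Hq_mul_Zrot β₃]; noncomm_ring
    _ = Xrot β₁ * Zrot β₂ * Xrot β₃ := by
        rw [Hq_mul_Hq]; noncomm_ring

lemma Xrot_add_mul_Zrot_mul_Xrot_sub (u v b : ℝ) :
    Xrot (u + v) * Zrot b * Xrot (u - v) =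
      ⟨Real.cos (b / 2) * Real.cos u, Real.cos (b / 2) * Real.sin u,
        -(Real.sin (b / 2) * Real.sin v), Real.sin (b / 2) * Real.cos v⟩ := by
  obtain ⟨p, q, rfl, rfl⟩ : ∃ p q, u = p + q ∧ v = p - q :=
    ⟨(u + v) / 2, (u - v) / 2, by ring, by ring⟩
  rw [show p + q + (p - q) = 2 * p by ring, show p + q - (p - q) = 2 * q by ring]
  ext <;> simp only [Quaternion.re_mul, Quaternion.imI_mul, Quaternion.imJ_mul,
    Quaternion.imK_mul] <;>
    simp [Xrot, Zrot, Real.cos_add, Real.sin_add, Real.cos_sub, Real.sin_sub] <;> ring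

lemma Zrot_add_mul_Hq_mul_Zrot_sub (s d : ℝ) :
    Zrot (s + d) * Hq * Zrot (s - d) =
      ⟨-Real.sin s / √2, Real.cos d / √2, Real.sin d / √2, Real.cos s / √2⟩ := by
  obtain ⟨p, q, rfl, rfl⟩ : ∃ p q, s = p + q ∧ d = p - q :=
    ⟨(s + d) / 2, (s - d) / 2, by ring, by ring⟩
  rw [show p + q + (p - q) = 2 * p by ring, show p + q - (p - q) = 2 * q by ring]
  ext <;> simp only [Quaternion.re_mul, Quaternion.imI_mul, Quaternion.imJ_mul,
    Quaternion.imK_mul] <;>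
    simp [Zrot, Hq, Real.cos_add, Real.sin_add, Real.cos_sub, Real.sin_sub] <;> ring

lemma arg_I_add_ofReal_div (A : ℝ) {B : ℝ} (hB : 0 < B) :
    arg (I + ↑(A / B)) = arg (A + B * I) := by
  rw [← arg_real_mul (A + B * I) (inv_pos.mpr hB)]
  congr 1
  have hB' : (B : ℂ) ≠ 0 := by exact_mod_cast hB.ne'
  push_cast
  field_simp
  ring

lemma norm_sq_add_norm_sq_eq_two (s d : ℝ) :
    ‖(-Real.sin s + Real.cos d * I : ℂ)‖ ^ 2 + ‖(Real.cos s - Real.sin d * I : ℂ)‖ ^ 2 = 2 := by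
  have h₁ : (-Real.sin s + Real.cos d * I : ℂ) = ↑(-Real.sin s) + ↑(Real.cos d) * I := by
    push_cast; ring
  have h₂ : (Real.cos s - Real.sin d * I : ℂ) = ↑(Real.cos s) + ↑(-Real.sin d) * I := by
    push_cast; ring
  rw [h₁, h₂, norm_add_mul_I, norm_add_mul_I, sq_sqrt (by positivity), sq_sqrt (by positivity)]
  linarith [Real.sin_sq_add_cos_sq s, Real.sin_sq_add_cos_sq d, neg_sq (Real.sin s),
    neg_sq (Real.sin d)]

theorem ZQ_EU_quaternion_identity_general (α₁ α₂ xp xm β₁ β₂ β₃ : ℝ) (z z' : ℂ)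
    (hxp : xp = (α₁ + α₂) / 2) (hxm : xm = xp - α₂)
    (hz : z = -Real.sin xp + Real.cos xm * Complex.I)
    (hz' : z' = Real.cos xp - Real.sin xm * Complex.I)
    (hz'0 : z' ≠ 0)
    (hβ₁ : β₁ = z.arg + z'.arg)
    (hβ₂ : β₂ = 2 * Complex.arg (Complex.I + ((‖z‖ / ‖z'‖ : ℝ) : ℂ)))
    (hβ₃ : β₃ = z.arg - z'.arg) :
    Zrot α₁ * Hq * Zrot α₂ =
      Hq * Zrot β₁ * Hq * Zrot β₂ * Hq * Zrot β₃ * Hq := by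
  obtain rfl : α₁ = xp + xm := by linarith
  obtain rfl : α₂ = xp - xm := by linarith
  have hβ₂_half : β₂ / 2 = arg (‖z‖ + ‖z'‖ * I) := by
    rw [hβ₂, mul_div_cancel_left₀ _ two_ne_zero, arg_I_add_ofReal_div _ (norm_pos_iff.mpr hz'0)]
  have hnorm : ‖(‖z‖ + ‖z'‖ * I : ℂ)‖ = √2 := by
    rw [norm_add_mul_I, hz, hz', norm_sq_add_norm_sq_eq_two]
  have hcos : Real.cos (β₂ / 2) = ‖z‖ / √2 := by
    have hw : (‖z‖ + ‖z'‖ * I : ℂ) ≠ 0 := norm_ne_zero_iff.mp (hnorm ▸ by positivity)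
    rw [hβ₂_half, cos_arg hw, hnorm]
    simp
  have hsin : Real.sin (β₂ / 2) = ‖z'‖ / √2 := by
    rw [hβ₂_half, sin_arg, hnorm]
    simp
  rw [Zrot_add_mul_Hq_mul_Zrot_sub, hβ₁, hβ₃, Hq_Zrot_Hq_Zrot_Hq_Zrot_Hq_eq_Xrot_Zrot_Xrot,
    Xrot_add_mul_Zrot_mul_Xrot_sub, hcos, hsin]
  ext <;> simp only [div_mul_eq_mul_div, norm_mul_cos_arg, norm_mul_sin_arg] <;>
    simp [hz, hz', Complex.sin_ofReal_re, Complex.cos_ofReal_re, neg_div]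

/-- the quaternionic Euler-angle identity behind the ZX rule (EU'):
with `x⁺ = (α₁+α₂)/2`, `x⁻ = x⁺ − α₂`, `z = −sin x⁺ + i cos x⁻`,
`z' = cos x⁺ − i sin x⁻` both nonzero, `β₁ = arg z + arg z'`,
`β₂ = 2 arg(i + |z|/|z'|)`, `β₃ = arg z − arg z'`, we have
`(α₁,z)·H·(α₂,z) = H·(β₁,z)·H·(β₂,z)·H·(β₃,z)·H`. -/
theorem ZQ_EU_quaternion_identity (α₁ α₂ xp xm β₁ β₂ β₃ : ℝ) (z z' : ℂ)
    (hxp : xp = (α₁ + α₂) / 2) (hxm : xm = xp - α₂)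
    (hz : z = -Real.sin xp + Real.cos xm * Complex.I)
    (hz' : z' = Real.cos xp - Real.sin xm * Complex.I)
    (hz0 : z ≠ 0) (hz'0 : z' ≠ 0)
    (hβ₁ : β₁ = z.arg + z'.arg)
    (hβ₂ : β₂ = 2 * Complex.arg (Complex.I + ((‖z‖ / ‖z'‖ : ℝ) : ℂ)))
    (hβ₃ : β₃ = z.arg - z'.arg) :
    Zrot α₁ * Hq * Zrot α₂ =
      Hq * Zrot β₁ * Hq * Zrot β₂ * Hq * Zrot β₃ * Hq :=
  ZQ_EU_quaternion_identity_general α₁ α₂ xp xm β₁ β₂ β₃ z z' hxp hxm hz hz' hz'0 hβ₁ hβ₂ hβ₃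
end

section
/- With the notation of the ZX (EU') rule—x⁺ = (α₁+α₂)/2, z = −sin x⁺ + i cos(x⁺ − α₂), z' = cos x⁺ − i sin(x⁺ − α₂), β₁ = arg z + arg z', β₂ = 2 arg(i + |z|/|z'|), β₃ = arg z − arg z', γ = x⁺ − arg z + (π − β₂)/2—the scalar identity e^{i(β₁+β₂+β₃+γ+9π)/2} · (i/√2) · (−√2 e^{iγ/2}) = e^{i(α₁+α₂+π)/2} holds. -/
open Real Complex

/-! The identity is independent of the particular `z`, `z'`: in `β₁ + β₂ + β₃ + 2γ` the terms
`arg z`, `arg z'` and `β₂` cancel, leaving `2x⁺ + π`. The constant `(i/√2)(−√2) = −i` contributes a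
phase `−π/2`, and the two sides then differ by the phase `4π`. -/

theorem exp_mul_I_mul_I_div_sqrt_two_mul_neg_sqrt_two (a b : ℝ) :
    Complex.exp (a * Complex.I) * (Complex.I / (Real.sqrt 2 : ℂ)) *
        (-(Real.sqrt 2 : ℂ) * Complex.exp (b * Complex.I)) =
      Complex.exp ((a + b - π / 2 : ℝ) * Complex.I) := by
  have hsqrt : (Real.sqrt 2 : ℂ) ≠ 0 := by exact_mod_cast (Real.sqrt_pos.mpr two_pos).ne'
  have hsplit : ((a + b - π / 2 : ℝ) : ℂ) * Complex.I =
      a * Complex.I + b * Complex.I + -π / 2 * Complex.I := by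
    push_cast; ring
  rw [hsplit, Complex.exp_add, Complex.exp_add, Complex.exp_neg_pi_div_two_mul_I]
  field_simp

theorem exp_ofReal_add_four_pi_mul_I (x : ℝ) :
    Complex.exp ((x + 4 * π : ℝ) * Complex.I) = Complex.exp (x * Complex.I) := by
  have h : ((x + 4 * π : ℝ) : ℂ) * Complex.I = x * Complex.I + (2 : ℕ) * (2 * π * Complex.I) := by
    push_cast; ring
  rw [h, Complex.exp_periodic.nat_mul 2]

theorem ZQ_EU_scalar_identity_general (α₁ α₂ xp β₁ β₂ β₃ γ : ℝ) (z z' : ℂ)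
    (hxp : xp = (α₁ + α₂) / 2)
    (hβ₁ : β₁ = z.arg + z'.arg)
    (hβ₂ : β₂ = 2 * Complex.arg (Complex.I + ((‖z‖ / ‖z'‖ : ℝ) : ℂ)))
    (hβ₃ : β₃ = z.arg - z'.arg)
    (hγ : γ = xp - z.arg + (π - β₂) / 2) :
    Complex.exp (((β₁ + β₂ + β₃ + γ + 9 * π) / 2 : ℝ) * Complex.I) *
        (Complex.I / (Real.sqrt 2 : ℂ)) *
        (-(Real.sqrt 2 : ℂ) * Complex.exp ((γ / 2 : ℝ) * Complex.I)) =
      Complex.exp (((α₁ + α₂ + π) / 2 : ℝ) * Complex.I) := by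
  have hphase : (β₁ + β₂ + β₃ + γ + 9 * π) / 2 + γ / 2 - π / 2 = (α₁ + α₂ + π) / 2 + 4 * π := by
    subst hβ₁ hβ₂ hβ₃ hγ hxp; ring
  rw [exp_mul_I_mul_I_div_sqrt_two_mul_neg_sqrt_two, hphase, exp_ofReal_add_four_pi_mul_I]

/-- the scalar identity of the translated (EU') rule: with the notation
`x⁺ = (α₁+α₂)/2`, `z = −sin x⁺ + i cos(x⁺−α₂)`, `z' = cos x⁺ − i sin(x⁺−α₂)` (both
nonzero), `β₁ = arg z + arg z'`, `β₂ = 2 arg(i + |z|/|z'|)`, `β₃ = arg z − arg z'`,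
`γ = x⁺ − arg z + (π − β₂)/2`, we have
`e^{i(β₁+β₂+β₃+γ+9π)/2} · (i/√2) · (−√2 e^{iγ/2}) = e^{i(α₁+α₂+π)/2}`. -/
theorem ZQ_EU_scalar_identity (α₁ α₂ xp xm β₁ β₂ β₃ γ : ℝ) (z z' : ℂ)
    (hxp : xp = (α₁ + α₂) / 2) (hxm : xm = xp - α₂)
    (hz : z = -Real.sin xp + Real.cos xm * Complex.I)
    (hz' : z' = Real.cos xp - Real.sin xm * Complex.I)
    (hz0 : z ≠ 0) (hz'0 : z' ≠ 0)
    (hβ₁ : β₁ = z.arg + z'.arg)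
    (hβ₂ : β₂ = 2 * Complex.arg (Complex.I + ((‖z‖ / ‖z'‖ : ℝ) : ℂ)))
    (hβ₃ : β₃ = z.arg - z'.arg)
    (hγ : γ = xp - z.arg + (π - β₂) / 2) :
    Complex.exp (((β₁ + β₂ + β₃ + γ + 9 * π) / 2 : ℝ) * Complex.I) *
        (Complex.I / (Real.sqrt 2 : ℂ)) *
        (-(Real.sqrt 2 : ℂ) * Complex.exp ((γ / 2 : ℝ) * Complex.I)) =
      Complex.exp (((α₁ + α₂ + π) / 2 : ℝ) * Complex.I) :=
  ZQ_EU_scalar_identity_general α₁ α₂ xp β₁ β₂ β₃ γ z z' hxp hβ₁ hβ₂ hβ₃ hγ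
end
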